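/- arXiv:0910.4997 — 2 statements merged into one kernel-verified Lean document; each statement's English description precedes it below -/
import Mathlib

section
/- Let S be a finite set of cardinality n and let M = (m_st) be a Coxeter matrix over S such that for every pair s ≠ t in S the entry m_st is even or equal to ∞. Then the rank of the Coxeter group W(M) equals n; in particular the standard generating set S is a generating set of minimal cardinality. -/
private lemma even_nsmul_eq_zero' {A : Type*} [AddCommMonoid A] {x : A} (hx : x + x = 0)
    {k : ℕ} (hk : Even k) : k • x = 0 := by
  obtain ⟨m, rfl⟩ := hk
  rw [add_nsmul, ← nsmul_add, hx, nsmul_zero]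

/-- If `S` has cardinality `n` and every off-diagonal entry of the Coxeter matrix `M` is even or
equal to `∞` (in Mathlib's convention, natural-number entries with `0` encoding `∞`), then the
rank of the Coxeter group `W(M)` equals `n`; in particular the standard generating set
(the set of simple reflections) generates, and `n` is the smallest cardinality of a generating
set. -/
theorem rank_coxeterGroup_of_even_entries
    {S : Type*} [Fintype S] (n : ℕ) (hcard : Fintype.card S = n)
    (M : CoxeterMatrix S)
    (hM : ∀ s t : S, s ≠ t → Even (M s t) ∨ M s t = 0) :
    Subgroup.closure (Set.range M.simple) = ⊤ ∧
    IsLeast {k : ℕ | ∃ X : Finset M.Group,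
      X.card = k ∧ Subgroup.closure (X : Set M.Group) = ⊤} n := by
  classical
  set cs := M.toCoxeterSystem
  have hclos : Subgroup.closure (Set.range M.simple) = ⊤ := by
    have := cs.subgroup_closure_range_simple
    rwa [M.toCoxeterSystem_simple] at this
  -- the homomorphism to (ZMod 2)^S
  set f : S → Multiplicative (S → ZMod 2) :=
    fun s => Multiplicative.ofAdd (Pi.single s 1) with hf
  have hxx : ∀ x : S → ZMod 2, x + x = 0 := fun x => by
    ext u; simpa using CharTwo.add_self_eq_zero (x u)
  have hlift : M.IsLiftable f := by
    intro s t
    rw [← ofAdd_add, ← ofAdd_nsmul]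
    rcases eq_or_ne s t with rfl | hst
    · rw [M.diagonal, one_nsmul, hxx, ofAdd_zero]
    · rcases hM s t hst with hev | h0
      · rw [even_nsmul_eq_zero' (hxx _) hev, ofAdd_zero]
      · rw [h0, zero_smul, ofAdd_zero]
  set φ : M.Group →* Multiplicative (S → ZMod 2) := cs.lift ⟨f, hlift⟩ with hφ
  have hφs : ∀ s : S, φ (M.simple s) = f s := fun s => cs.lift_apply_simple hlift s
  have hfinj : Function.Injective f := by
    intro s t h
    by_contra hst
    have := congrFun (Multiplicative.ofAdd.injective h) s
    simp [Pi.single_apply, hst, Ne.symm hst] at this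
  -- surjectivity of φ
  have hsurj : Function.Surjective φ := by
    intro z
    set y := Multiplicative.toAdd z with hy
    set T := Finset.univ.filter (fun s => y s = 1) with hT
    refine ⟨(T.toList.map M.simple).prod, ?_⟩
    rw [map_list_prod, List.map_map]
    have h1 : φ ∘ M.simple = f := funext hφs
    rw [h1]
    have h2 : (T.toList.map f).prod = ∏ s ∈ T, f s := by
      rw [Finset.prod_map_toList]
    rw [h2, hf, ← ofAdd_sum]
    have hyz : Multiplicative.ofAdd y = z := rfl
    rw [← hyz]
    congr 1
    ext u
    rw [Finset.sum_apply]
    simp only [Pi.single_apply, Finset.sum_ite_eq, hT]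
    have : y u = 0 ∨ y u = 1 := by generalize y u = a; revert a; decide
    rcases this with h | h <;> simp [h]
  refine ⟨hclos, ?_, ?_⟩
  · -- membership : exists X of card n generating
    refine ⟨Finset.univ.image M.simple, ?_, ?_⟩
    · rw [Finset.card_image_of_injective _ (fun a b hab => hfinj (by rw [← hφs a, ← hφs b, hab])),
        Finset.card_univ, hcard]
    · rw [← top_le_iff, ← hclos, Subgroup.closure_le]
      rintro x ⟨s, rfl⟩
      exact Subgroup.subset_closure (by simp)
  · -- lower bound
    rintro k ⟨X, rfl, hX⟩
    set v : X → (S → ZMod 2) := fun x => Multiplicative.toAdd (φ x) with hv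
    set p : Submodule (ZMod 2) (S → ZMod 2) := Submodule.span (ZMod 2) (Set.range v) with hp
    have hspan : p = ⊤ := by
      set K : Subgroup (Multiplicative (S → ZMod 2)) :=
        { carrier := Multiplicative.toAdd ⁻¹' (p : Set (S → ZMod 2))
          one_mem' := by exact p.zero_mem
          mul_mem' := by intro a b ha hb; exact p.add_mem ha hb
          inv_mem' := by intro a ha; exact p.neg_mem ha } with hK
      have htop : Subgroup.closure (φ '' (X : Set M.Group)) = ⊤ := by
        rw [← MonoidHom.map_closure, hX, Subgroup.map_top_of_surjective _ hsurj]
      have hle : Subgroup.closure (φ '' (X : Set M.Group)) ≤ K := by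
        rw [Subgroup.closure_le]
        rintro z ⟨x, hx, rfl⟩
        have hm : v ⟨x, hx⟩ ∈ p := Submodule.subset_span ⟨⟨x, hx⟩, rfl⟩
        exact hm
      rw [eq_top_iff]
      intro y _
      exact (htop ▸ hle) (Subgroup.mem_top (Multiplicative.ofAdd y))
    have h1 := finrank_le_of_span_eq_top (hp ▸ hspan)
    rw [Module.finrank_pi, hcard, Fintype.card_coe] at h1
    exact h1
end

section
/- Let W be the Coxeter group on generators s₁,...,s₅ with Coxeter matrix M given by m_ii = 1 for all i, m_12 = m_21 = 8, m_2j = m_j2 = 101 for j ∈ {3,4,5}, and m_ij = ∞ for all remaining pairs i ≠ j. Then the four-element set X = { s₂, s₁s₂s₁s₂s₁s₂s₁·(s₃s₂)^50, s₁s₂s₁·(s₄s₂)^50, s₁·(s₅s₂)^50 } generates W; in particular the rank of W is at most 4, which is strictly less than the cardinality 5 of the standard Coxeter generating set, even though every finite off-diagonal entry of M is at least 2^{5-2} = 8. -/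
/-- The Coxeter matrix on five generators `s₁, …, s₅` with `m₁₂ = 8`, `m₂ⱼ = 101` for
`j ∈ {3,4,5}` and all remaining off-diagonal entries equal to `∞` (encoded by `0` in
Mathlib's convention). -/
def M5 : CoxeterMatrix (Fin 5) where
  M := !![1,  8,  0,  0,  0;
          8,  1,  101,101,101;
          0,  101,1,  0,  0;
          0,  101,0,  1,  0;
          0,  101,0,  0,  1]
  off_diagonal := by intro i i' h; fin_cases i <;> fin_cases i' <;> simp_all

/-!
In a dihedral group of odd order `2m` generated by involutions `a, c`, the element
`(c a)^((m-1)/2)` conjugates `a` to `c`. Each generator `p · (sⱼ s₂)^50` of `X` thus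
conjugates `p s₂ p⁻¹` to `sⱼ`, so once `p s₂ p⁻¹` is known to lie in `⟨X⟩`, both `sⱼ` and
`p` follow. Starting from `p = (s₁ s₂)³ s₁`, which commutes with `s₂` because `m₁₂ = 8`,
this peels off `s₃`, `s₁s₂s₁s₂s₁s₂s₁`, `s₄`, `s₁s₂s₁`, `s₅` and finally `s₁`
(in the code, `sᵢ` is `s (i - 1)`).
-/

section Involutions

variable {G : Type*} [Group G] {a b c : G}

theorem inv_pow_mul_mul_pow_eq_of_pow_eq_one (ha : a * a = 1) (hc : c * c = 1) {k : ℕ}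
    (h : (a * c) ^ (2 * k + 1) = 1) : ((c * a) ^ k)⁻¹ * a * (c * a) ^ k = c := by
  have ha' : a⁻¹ = a := inv_eq_of_mul_eq_one_right ha
  have hc' : c⁻¹ = c := inv_eq_of_mul_eq_one_right hc
  have hsemi : a * (c * a) ^ k = (a * c) ^ k * a :=
    SemiconjBy.pow_right (by simp only [SemiconjBy, mul_assoc]) k
  have hpow : (a * c) ^ (2 * k) = c * a := by
    rw [pow_succ] at h
    rw [eq_inv_of_mul_eq_one_left h, mul_inv_rev, ha', hc']
  calc ((c * a) ^ k)⁻¹ * a * (c * a) ^ k = (a * c) ^ k * (a * (c * a) ^ k) := by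
        rw [← inv_pow, mul_inv_rev, ha', hc', mul_assoc]
    _ = (a * c) ^ (2 * k) * a := by rw [hsemi, ← mul_assoc, ← pow_add, two_mul]
    _ = c := by rw [hpow, mul_assoc, ha, mul_one]

theorem pow_mul_mul_mul_inv_eq_of_pow_eq_one (ha : a * a = 1) (hb : b * b = 1) {k : ℕ}
    (h : (b * a) ^ (2 * k + 2) = 1) : (b * a) ^ k * b * a * ((b * a) ^ k * b)⁻¹ = a := by
  have ha' : a⁻¹ = a := inv_eq_of_mul_eq_one_right ha
  have hb' : b⁻¹ = b := inv_eq_of_mul_eq_one_right hb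
  have hsemi : b * (a * b) ^ k = (b * a) ^ k * b :=
    SemiconjBy.pow_right (by simp only [SemiconjBy, mul_assoc]) k
  have hpow : (b * a) ^ (2 * k + 1) = a * b := by
    rw [pow_succ] at h
    rw [eq_inv_of_mul_eq_one_left h, mul_inv_rev, ha', hb']
  calc (b * a) ^ k * b * a * ((b * a) ^ k * b)⁻¹ = (b * a) ^ (k + 1) * (b * (a * b) ^ k) := by
        rw [mul_inv_rev, hb', ← inv_pow, mul_inv_rev, ha', hb', pow_succ]
        simp only [mul_assoc]
    _ = (b * a) ^ (2 * k + 1) * b := by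
        rw [hsemi, ← mul_assoc, ← pow_add, add_right_comm, ← two_mul]
    _ = a := by rw [hpow, mul_assoc, hb, mul_one]

theorem Subgroup.mem_and_mem_of_mul_pow_mem {H : Subgroup G} {p : G} {k : ℕ}
    (ha : a * a = 1) (hc : c * c = 1) (h : (a * c) ^ (2 * k + 1) = 1) (haH : a ∈ H)
    (hpa : p * a * p⁻¹ ∈ H) (hpr : p * (c * a) ^ k ∈ H) : c ∈ H ∧ p ∈ H := by
  have hcH : c ∈ H := by
    have hconj : (p * (c * a) ^ k)⁻¹ * (p * a * p⁻¹) * (p * (c * a) ^ k) = c :=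
      calc _ = ((c * a) ^ k)⁻¹ * a * (c * a) ^ k := by
            simp only [mul_inv_rev, mul_assoc, inv_mul_cancel_left]
        _ = c := inv_pow_mul_mul_pow_eq_of_pow_eq_one ha hc h
    exact hconj ▸ mul_mem (mul_mem (inv_mem hpr) hpa) hpr
  have hrH : (c * a) ^ k ∈ H := pow_mem (mul_mem hcH haH) k
  exact ⟨hcH, mul_inv_cancel_right p _ ▸ mul_mem hpr (inv_mem hrH)⟩

end Involutions

def weidmannGenerators {G : Type*} [Group G] [DecidableEq G] (s : Fin 5 → G) : Finset G :=
  {s 1, s 0 * s 1 * s 0 * s 1 * s 0 * s 1 * s 0 * (s 2 * s 1) ^ 50,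
    s 0 * s 1 * s 0 * (s 3 * s 1) ^ 50, s 0 * (s 4 * s 1) ^ 50}

theorem closure_weidmannGenerators_eq_top {G : Type*} [Group G] [DecidableEq G] {s : Fin 5 → G}
    (hs : ∀ i, s i * s i = 1) (h01 : (s 0 * s 1) ^ 8 = 1) (h12 : (s 1 * s 2) ^ 101 = 1)
    (h13 : (s 1 * s 3) ^ 101 = 1) (h14 : (s 1 * s 4) ^ 101 = 1)
    (hgen : Subgroup.closure (Set.range s) = ⊤) :
    Subgroup.closure (weidmannGenerators s : Set G) = ⊤ := by
  set H := Subgroup.closure (weidmannGenerators s : Set G)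
  have hmem : ∀ {g}, g ∈ weidmannGenerators s → g ∈ H := fun hg => Subgroup.subset_closure hg
  have hinv : ∀ i, (s i)⁻¹ = s i := fun i => inv_eq_of_mul_eq_one_right (hs i)
  have h1H : s 1 ∈ H := hmem (by simp [weidmannGenerators])
  have hp3 : s 0 * s 1 * s 0 * s 1 * s 0 * s 1 * s 0 = (s 0 * s 1) ^ 3 * s 0 := by
    simp only [pow_succ, pow_zero, one_mul, mul_assoc]
  obtain ⟨h2H, hp3H⟩ := Subgroup.mem_and_mem_of_mul_pow_mem (k := 50)
    (p := s 0 * s 1 * s 0 * s 1 * s 0 * s 1 * s 0) (hs 1) (hs 2) h12 h1H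
    (by rwa [hp3, pow_mul_mul_mul_inv_eq_of_pow_eq_one (hs 1) (hs 0) h01])
    (hmem (by simp [weidmannGenerators]))
  obtain ⟨h3H, hp4H⟩ := Subgroup.mem_and_mem_of_mul_pow_mem (k := 50) (p := s 0 * s 1 * s 0)
    (hs 1) (hs 3) h13 h1H
    (by simpa only [mul_inv_rev, hinv, mul_assoc] using hp3H)
    (hmem (by simp [weidmannGenerators]))
  obtain ⟨h4H, h0H⟩ := Subgroup.mem_and_mem_of_mul_pow_mem (k := 50) (p := s 0)
    (hs 1) (hs 4) h14 h1H
    (by simpa only [hinv, mul_assoc] using hp4H)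
    (hmem (by simp [weidmannGenerators]))
  refine eq_top_iff.2 (hgen ▸ (Subgroup.closure_le H).2 (Set.range_subset_iff.2 fun i => ?_))
  fin_cases i <;> assumption

/-- The four-element set
`X = { s₂, s₁s₂s₁s₂s₁s₂s₁·(s₃s₂)⁵⁰, s₁s₂s₁·(s₄s₂)⁵⁰, s₁·(s₅s₂)⁵⁰ }` generates the Coxeter
group `W(M5)`; in particular the rank of `W(M5)` is at most `4 < 5 = |S|`, even though every
finite off-diagonal entry of `M5` is at least `2^(5-2) = 8`. -/
theorem weidmann_example_rank_le_four :
    Subgroup.closure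
      ({M5.simple 1,
        M5.simple 0 * M5.simple 1 * M5.simple 0 * M5.simple 1 * M5.simple 0 * M5.simple 1 *
          M5.simple 0 * (M5.simple 2 * M5.simple 1) ^ 50,
        M5.simple 0 * M5.simple 1 * M5.simple 0 * (M5.simple 3 * M5.simple 1) ^ 50,
        M5.simple 0 * (M5.simple 4 * M5.simple 1) ^ 50} : Set M5.Group) = ⊤ ∧
    (∃ X : Finset M5.Group, X.card ≤ 4 ∧ 4 < Fintype.card (Fin 5) ∧
      Subgroup.closure (X : Set M5.Group) = ⊤) ∧
    (∀ i j : Fin 5, i ≠ j → M5 i j = 0 ∨ 2 ^ (5 - 2) ≤ M5 i j) := by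
  classical
  let cs := M5.toCoxeterSystem
  have hX : Subgroup.closure (weidmannGenerators M5.simple : Set M5.Group) = ⊤ :=
    closure_weidmannGenerators_eq_top cs.simple_mul_simple_self (cs.simple_mul_simple_pow 0 1)
      (cs.simple_mul_simple_pow 1 2) (cs.simple_mul_simple_pow 1 3) (cs.simple_mul_simple_pow 1 4)
      cs.subgroup_closure_range_simple
  refine ⟨?_, ⟨_, Finset.card_le_four, by decide, hX⟩, fun i j hij => ?_⟩
  · simpa only [weidmannGenerators, Finset.coe_insert, Finset.coe_singleton] using hX
  · fin_cases i <;> fin_cases j <;> simp_all [M5]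
end
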